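/- arXiv:1312.2196 — 8 statements merged into one kernel-verified Lean document; each statement's English description precedes it below -/
import Mathlib

section
/- For every z ∈ ℂ and every j ≥ 0 the following identities hold: P_j(z)Q⁺_j(z) − Q_j(z)P⁺_j(z) = O; P_{j+1}(z)Q⁺_j(z) − Q_{j+1}(z)P⁺_j(z) = A_{j,j+1}⁻¹; and Q_j(z)P⁺_{j+1}(z) − P_j(z)Q⁺_{j+1}(z) = A_{j+1,j}⁻¹. -/
open Matrix Filter
open scoped BigOperators ENNReal

/-- Square `n × n` complex matrices. -/
abbrev Mat (n : ℕ) := Matrix (Fin n) (Fin n) ℂ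

/-- `Alo b j` is the coefficient `A_{j,j-1}` (so `Alo b 0 = A_{0,-1} = -E` and
`Alo b (j+1) = A_{j+1,j} = b j`). -/
def Alo {n : ℕ} (b : ℕ → Mat n) : ℕ → Mat n
  | 0 => -1
  | j + 1 => b j

/-- `Aup a j` is the coefficient `A_{j-1,j}` (so `Aup a 0 = A_{-1,0} = -E` and
`Aup a (j+1) = A_{j,j+1} = a j`). -/
def Aup {n : ℕ} (a : ℕ → Mat n) : ℕ → Mat n
  | 0 => -1
  | j + 1 => a j

/-- Matrix equation (1).  Sequences are indexed by `ℕ`, where index `k` represents the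
paper index `k - 1` (so index `0` is the paper index `-1`).  Here `d j = A_{j,j}`,
`a j = A_{j,j+1}`, `b j = A_{j+1,j}`. -/
def SolEq1 {n : ℕ} (d a b : ℕ → Mat n) (z : ℂ) (Y : ℕ → Mat n) : Prop :=
  ∀ j : ℕ, Alo b j * Y j + d j * Y (j + 1) + a j * Y (j + 2) = z • Y (j + 1)

/-- Matrix equation (2), with the same index shift. -/
def SolEq2 {n : ℕ} (d a b : ℕ → Mat n) (z : ℂ) (Y : ℕ → Mat n) : Prop :=
  ∀ j : ℕ, Y j * Aup a j + Y (j + 1) * d j + Y (j + 2) * b j = z • Y (j + 1)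

/-- Vector equation (1v), with the same index shift. -/
def SolEq1v {n : ℕ} (d a b : ℕ → Mat n) (z : ℂ) (u : ℕ → Fin n → ℂ) : Prop :=
  ∀ j : ℕ, Alo b j *ᵥ u j + d j *ᵥ u (j + 1) + a j *ᵥ u (j + 2) = z • u (j + 1)

/-- Vector equation (2v) for the row vectors `v_j^*`, with the same index shift. -/
def SolEq2v {n : ℕ} (d a b : ℕ → Mat n) (z : ℂ) (v : ℕ → Fin n → ℂ) : Prop :=
  ∀ j : ℕ, star (v j) ᵥ* Aup a j + star (v (j + 1)) ᵥ* d j + star (v (j + 2)) ᵥ* b j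
    = z • star (v (j + 1))


/-!
For a solution `Y` of (1) and a solution `Y⁺` of (2), the Wronskian
`Y⁺_k A_{k,k+1} Y_{k+1} - Y⁺_{k+1} A_{k+1,k} Y_k` does not depend on `k`. Collecting the four
Wronskians of `(P⁺, Q⁺)` against `(P, Q)` into a `2n × 2n` block matrix, this says
`Ψ_k J_k Φ_k = J`, where `Φ_k`, `Ψ_k` are the block transfer matrices of `(P, Q)` and `(P⁺, Q⁺)`,
`J_k` is the antidiagonal coefficient matrix and `J` the standard symplectic matrix (the value at
`k = -1`). Since `J² = -1`, the matrix `-J Ψ_k J_k` is a left inverse of `Φ_k`, hence also a right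
inverse, and the four blocks of `Φ_k (-J) Ψ_k J_k = 1` are the claimed identities.
-/

section BlockAlgebra

variable {l R : Type*} [Fintype l] [DecidableEq l] [CommRing R]

theorem fromBlocks_mul_neg_J_mul_fromBlocks (P Q P' Q' Pp Qp Pp' Qp' : Matrix l l R) :
    fromBlocks P Q P' Q' * -J l R * fromBlocks Pp Pp' Qp Qp' =
      fromBlocks (P * Qp - Q * Pp) (P * Qp' - Q * Pp') (P' * Qp - Q' * Pp)
        (P' * Qp' - Q' * Pp') := by
  simp only [J, fromBlocks_neg, neg_zero, neg_neg, fromBlocks_multiply, mul_zero, mul_one,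
    mul_neg, zero_add, add_zero, neg_mul]
  congr 1 <;> abel

theorem fromBlocks_mul_antidiagonal (X V U X' A B : Matrix l l R) :
    fromBlocks X V U X' * fromBlocks 0 A (-B) 0 =
      fromBlocks (-(V * B)) (X * A) (-(X' * B)) (U * A) := by
  simp [fromBlocks_multiply]

end BlockAlgebra

namespace JacobiWronskian

variable {n : ℕ}

def wronskian (a b : ℕ → Mat n) (Yp Y : ℕ → Mat n) (k : ℕ) : Mat n :=
  Yp k * Aup a k * Y (k + 1) - Yp (k + 1) * Alo b k * Y k

theorem wronskian_zero (a b : ℕ → Mat n) (Yp Y : ℕ → Mat n) :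
    wronskian a b Yp Y 0 = Yp 1 * Y 0 - Yp 0 * Y 1 := by
  simp only [wronskian, Aup, Alo, mul_neg, mul_one, neg_mul]
  abel

theorem wronskian_succ {d a b : ℕ → Mat n} {z : ℂ} {Yp Y : ℕ → Mat n}
    (hYp : SolEq2 d a b z Yp) (hY : SolEq1 d a b z Y) (k : ℕ) :
    wronskian a b Yp Y (k + 1) = wronskian a b Yp Y k := by
  have h1 := congrArg (Yp (k + 1) * ·) (hY k)
  have h2 := congrArg (· * Y (k + 1)) (hYp k)
  simp only [mul_add, add_mul, mul_smul_comm, smul_mul_assoc, ← mul_assoc] at h1 h2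
  change Yp (k + 1) * a k * Y (k + 2) - Yp (k + 2) * b k * Y (k + 1) = wronskian a b Yp Y k
  rw [wronskian]
  linear_combination (norm := abel) h1 - h2

theorem wronskian_eq_wronskian_zero {d a b : ℕ → Mat n} {z : ℂ} {Yp Y : ℕ → Mat n}
    (hYp : SolEq2 d a b z Yp) (hY : SolEq1 d a b z Y) (k : ℕ) :
    wronskian a b Yp Y k = wronskian a b Yp Y 0 := by
  induction k with
  | zero => rfl
  | succ k ih => rw [wronskian_succ hYp hY, ih]

def transfer (P Q : ℕ → Mat n) (k : ℕ) : Matrix (Fin n ⊕ Fin n) (Fin n ⊕ Fin n) ℂ :=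
  fromBlocks (P k) (Q k) (P (k + 1)) (Q (k + 1))

def adjTransfer (Pp Qp : ℕ → Mat n) (k : ℕ) : Matrix (Fin n ⊕ Fin n) (Fin n ⊕ Fin n) ℂ :=
  fromBlocks (Pp k) (Pp (k + 1)) (Qp k) (Qp (k + 1))

def coeffBlock (a b : ℕ → Mat n) (k : ℕ) : Matrix (Fin n ⊕ Fin n) (Fin n ⊕ Fin n) ℂ :=
  fromBlocks 0 (Aup a k) (-Alo b k) 0

theorem adjTransfer_mul_coeffBlock_mul_transfer (a b P Q Pp Qp : ℕ → Mat n) (k : ℕ) :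
    adjTransfer Pp Qp k * coeffBlock a b k * transfer P Q k =
      fromBlocks (wronskian a b Pp P k) (wronskian a b Pp Q k)
        (wronskian a b Qp P k) (wronskian a b Qp Q k) := by
  simp only [adjTransfer, coeffBlock, transfer, fromBlocks_multiply, wronskian, mul_zero,
    add_zero, zero_add, mul_neg, neg_mul]
  congr 1 <;> abel

theorem transfer_mul_neg_J_mul_adjTransfer_mul_coeffBlock {d a b : ℕ → Mat n} {z : ℂ}
    {P Q Pp Qp : ℕ → Mat n} (hP : SolEq1 d a b z P) (hQ : SolEq1 d a b z Q)
    (hPp : SolEq2 d a b z Pp) (hQp : SolEq2 d a b z Qp)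
    (hP0 : P 0 = 1) (hP1 : P 1 = 0) (hQ0 : Q 0 = 0) (hQ1 : Q 1 = 1)
    (hPp0 : Pp 0 = 1) (hPp1 : Pp 1 = 0) (hQp0 : Qp 0 = 0) (hQp1 : Qp 1 = 1) (k : ℕ) :
    transfer P Q k * -J (Fin n) ℂ * adjTransfer Pp Qp k * coeffBlock a b k = 1 := by
  have hWronskian : adjTransfer Pp Qp k * coeffBlock a b k * transfer P Q k = J (Fin n) ℂ := by
    rw [adjTransfer_mul_coeffBlock_mul_transfer, wronskian_eq_wronskian_zero hPp hP,
      wronskian_eq_wronskian_zero hPp hQ, wronskian_eq_wronskian_zero hQp hP,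
      wronskian_eq_wronskian_zero hQp hQ]
    simp [wronskian_zero, hP0, hP1, hQ0, hQ1, hPp0, hPp1, hQp0, hQp1, J]
  have hLeft : -J (Fin n) ℂ * adjTransfer Pp Qp k * coeffBlock a b k * transfer P Q k = 1 := by
    rw [mul_assoc _ (adjTransfer Pp Qp k), mul_assoc, hWronskian, neg_mul, J_squared, neg_neg]
  simpa only [mul_assoc] using mul_eq_one_comm.mp hLeft

end JacobiWronskian

open JacobiWronskian in
theorem statement0_general {n : ℕ} (d a b : ℕ → Mat n)
    (z : ℂ)
    (P Q Pp Qp : ℕ → Mat n)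
    (hP : SolEq1 d a b z P) (hQ : SolEq1 d a b z Q)
    (hPp : SolEq2 d a b z Pp) (hQp : SolEq2 d a b z Qp)
    (hP0 : P 0 = 1) (hP1 : P 1 = 0) (hQ0 : Q 0 = 0) (hQ1 : Q 1 = 1)
    (hPp0 : Pp 0 = 1) (hPp1 : Pp 1 = 0) (hQp0 : Qp 0 = 0) (hQp1 : Qp 1 = 1)
    (j : ℕ) :
    P (j + 1) * Qp (j + 1) - Q (j + 1) * Pp (j + 1) = 0 ∧
    P (j + 2) * Qp (j + 1) - Q (j + 2) * Pp (j + 1) = (a j)⁻¹ ∧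
    Q (j + 1) * Pp (j + 2) - P (j + 1) * Qp (j + 2) = (b j)⁻¹ := by
  have key := transfer_mul_neg_J_mul_adjTransfer_mul_coeffBlock hP hQ hPp hQp
    hP0 hP1 hQ0 hQ1 hPp0 hPp1 hQp0 hQp1 (j + 1)
  rw [transfer, adjTransfer, coeffBlock, fromBlocks_mul_neg_J_mul_fromBlocks,
    fromBlocks_mul_antidiagonal, ← fromBlocks_one, fromBlocks_inj] at key
  obtain ⟨hV, hX, -, hU⟩ := key
  change _ * a j = 0 at hX
  change _ * a j = 1 at hU
  change -(_ * b j) = 1 at hV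
  refine ⟨?_, (inv_eq_left_inv hU).symm, ?_⟩
  · rw [← mul_one (_ - _), ← mul_eq_one_comm.mp hU, ← mul_assoc, hX, zero_mul]
  · rw [← neg_sub, inv_eq_left_inv (by rwa [← neg_mul] at hV)]

/-- the identities (ind1). -/
theorem statement0 {n : ℕ} (hn : 1 ≤ n) (d a b : ℕ → Mat n)
    (ha : ∀ j, IsUnit (a j)) (hb : ∀ j, IsUnit (b j)) (z : ℂ)
    (P Q Pp Qp : ℕ → Mat n)
    (hP : SolEq1 d a b z P) (hQ : SolEq1 d a b z Q)
    (hPp : SolEq2 d a b z Pp) (hQp : SolEq2 d a b z Qp)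
    (hP0 : P 0 = 1) (hP1 : P 1 = 0) (hQ0 : Q 0 = 0) (hQ1 : Q 1 = 1)
    (hPp0 : Pp 0 = 1) (hPp1 : Pp 1 = 0) (hQp0 : Qp 0 = 0) (hQp1 : Qp 1 = 1)
    (j : ℕ) :
    P (j + 1) * Qp (j + 1) - Q (j + 1) * Pp (j + 1) = 0 ∧
    P (j + 2) * Qp (j + 1) - Q (j + 2) * Pp (j + 1) = (a j)⁻¹ ∧
    Q (j + 1) * Pp (j + 2) - P (j + 1) * Qp (j + 2) = (b j)⁻¹ :=
  statement0_general d a b z P Q Pp Qp hP hQ hPp hQp hP0 hP1 hQ0 hQ1 hPp0 hPp1 hQp0 hQp1 j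
end

section
/- For every z ∈ ℂ and every j ≥ 0 the following identities hold: Q⁺_{j+1}(z)A_{j+1,j}Q_j(z) − Q⁺_j(z)A_{j,j+1}Q_{j+1}(z) = O; P⁺_{j+1}(z)A_{j+1,j}P_j(z) − P⁺_j(z)A_{j,j+1}P_{j+1}(z) = O; P⁺_{j+1}(z)A_{j+1,j}Q_j(z) − P⁺_j(z)A_{j,j+1}Q_{j+1}(z) = E; and Q⁺_j(z)A_{j,j+1}P_{j+1}(z) − Q⁺_{j+1}(z)A_{j+1,j}P_j(z) = E. -/
open Matrix Filter
open scoped BigOperators ENNReal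

/-!
The bracket `W_k(U, V) = U_{k+1} A_{k+1,k} V_k - U_k A_{k,k+1} V_{k+1}` of a solution `U` of the
left equation (2) and a solution `V` of the right equation (1) is independent of `k`: substituting
the recurrences for `U_{k+2} A_{k+1,k}` and `A_{k,k+1} V_{k+2}`, the terms in `z` and in `A_{k,k}`
cancel. With `A_{0,-1} = A_{-1,0} = -E` its initial value is `U_{-1} V_0 - U_0 V_{-1}`, which the
initial conditions evaluate to `O`, `O`, `E` and `-E`.
-/

variable {n : ℕ}

def wronskian (a b U V : ℕ → Mat n) (k : ℕ) : Mat n :=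
  U (k + 1) * Alo b k * V k - U k * Aup a k * V (k + 1)

theorem wronskian_zero (a b U V : ℕ → Mat n) :
    wronskian a b U V 0 = U 0 * V 1 - U 1 * V 0 := by
  simp only [wronskian, Alo, Aup, mul_neg, mul_one, neg_mul]
  abel

theorem wronskian_succ {d a b : ℕ → Mat n} {z : ℂ} {U V : ℕ → Mat n}
    (hU : SolEq2 d a b z U) (hV : SolEq1 d a b z V) (k : ℕ) :
    wronskian a b U V (k + 1) = wronskian a b U V k := by
  have hUk : U (k + 2) * b k = z • U (k + 1) - U k * Aup a k - U (k + 1) * d k := by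
    rw [← hU k]; abel
  have hVk : a k * V (k + 2) = z • V (k + 1) - Alo b k * V k - d k * V (k + 1) := by
    rw [← hV k]; abel
  calc wronskian a b U V (k + 1)
      = U (k + 2) * b k * V (k + 1) - U (k + 1) * (a k * V (k + 2)) := by
        rw [wronskian, mul_assoc (U (k + 1))]; rfl
    _ = wronskian a b U V k := by
        rw [hUk, hVk, wronskian]
        simp only [sub_mul, mul_sub, smul_mul_assoc, mul_smul_comm, mul_assoc]
        abel

theorem wronskian_eq_wronskian_zero {d a b : ℕ → Mat n} {z : ℂ} {U V : ℕ → Mat n}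
    (hU : SolEq2 d a b z U) (hV : SolEq1 d a b z V) (k : ℕ) :
    wronskian a b U V k = wronskian a b U V 0 := by
  induction k with
  | zero => rfl
  | succ k ih => rw [wronskian_succ hU hV, ih]

theorem statement1_general {n : ℕ} (d a b : ℕ → Mat n)
    (z : ℂ)
    (P Q Pp Qp : ℕ → Mat n)
    (hP : SolEq1 d a b z P) (hQ : SolEq1 d a b z Q)
    (hPp : SolEq2 d a b z Pp) (hQp : SolEq2 d a b z Qp)
    (hP0 : P 0 = 1) (hP1 : P 1 = 0) (hQ0 : Q 0 = 0) (hQ1 : Q 1 = 1)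
    (hPp0 : Pp 0 = 1) (hPp1 : Pp 1 = 0) (hQp0 : Qp 0 = 0) (hQp1 : Qp 1 = 1)
    (j : ℕ) :
    Qp (j + 2) * b j * Q (j + 1) - Qp (j + 1) * a j * Q (j + 2) = 0 ∧
    Pp (j + 2) * b j * P (j + 1) - Pp (j + 1) * a j * P (j + 2) = 0 ∧
    Pp (j + 2) * b j * Q (j + 1) - Pp (j + 1) * a j * Q (j + 2) = 1 ∧
    Qp (j + 1) * a j * P (j + 2) - Qp (j + 2) * b j * P (j + 1) = 1 := by
  have hQQ := (wronskian_eq_wronskian_zero hQp hQ (j + 1)).trans (wronskian_zero a b Qp Q)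
  have hPP := (wronskian_eq_wronskian_zero hPp hP (j + 1)).trans (wronskian_zero a b Pp P)
  have hPQ := (wronskian_eq_wronskian_zero hPp hQ (j + 1)).trans (wronskian_zero a b Pp Q)
  have hQP := (wronskian_eq_wronskian_zero hQp hP (j + 1)).trans (wronskian_zero a b Qp P)
  simp only [wronskian, Alo, Aup, hP0, hP1, hQ0, hQ1, hPp0, hPp1, hQp0, hQp1,
    mul_zero, mul_one, sub_zero, zero_sub] at hQQ hPP hPQ hQP
  exact ⟨hQQ, hPP, hPQ, by rw [← neg_sub, hQP, neg_neg]⟩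

/-- the identities (ind2). -/
theorem statement1 {n : ℕ} (hn : 1 ≤ n) (d a b : ℕ → Mat n)
    (ha : ∀ j, IsUnit (a j)) (hb : ∀ j, IsUnit (b j)) (z : ℂ)
    (P Q Pp Qp : ℕ → Mat n)
    (hP : SolEq1 d a b z P) (hQ : SolEq1 d a b z Q)
    (hPp : SolEq2 d a b z Pp) (hQp : SolEq2 d a b z Qp)
    (hP0 : P 0 = 1) (hP1 : P 1 = 0) (hQ0 : Q 0 = 0) (hQ1 : Q 1 = 1)
    (hPp0 : Pp 0 = 1) (hPp1 : Pp 1 = 0) (hQp0 : Qp 0 = 0) (hQp1 : Qp 1 = 1)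
    (j : ℕ) :
    Qp (j + 2) * b j * Q (j + 1) - Qp (j + 1) * a j * Q (j + 2) = 0 ∧
    Pp (j + 2) * b j * P (j + 1) - Pp (j + 1) * a j * P (j + 2) = 0 ∧
    Pp (j + 2) * b j * Q (j + 1) - Pp (j + 1) * a j * Q (j + 2) = 1 ∧
    Qp (j + 1) * a j * P (j + 2) - Qp (j + 2) * b j * P (j + 1) = 1 :=
  statement1_general d a b z P Q Pp Qp hP hQ hPp hQp hP0 hP1 hQ0 hQ1 hPp0 hPp1 hQp0 hQp1 j
end

section
/- (Representation (rep2).) Let z, z_0 ∈ ℂ and let (Y⁺_j)_{j ≥ −1} be a solution of the matrix equation (2) at z. Then for every k ≥ 0 there exist complex n×n matrices C_k^{1,+} and C_k^{2,+} such that for all j ≥ k+1: Y⁺_j = C_k^{1,+}Q⁺_j(z_0) + C_k^{2,+}P⁺_j(z_0) + (z − z_0)·Σ_{i=k}^{j−1} Y⁺_i·( Q_i(z_0)P⁺_j(z_0) − P_i(z_0)Q⁺_j(z_0) ). -/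
open Matrix Filter
open scoped BigOperators ENNReal

/-! Variation of constants. The mixed Wronskians of the fundamental solutions are constant, which
makes the block matrix `[[Q⁺_j, Q⁺_{j+1}], [P⁺_j, P⁺_{j+1}]]` invertible and gives the kernel
`K(i, j) = Q_i P⁺_j - P_i Q⁺_j` the properties `K(j, j) = 0` and `K(j, j+1) A_{j,j-1} = E`.
With these, `S_j = ∑_{k ≤ i < j} Y⁺_i K(i, j)` solves (2) at `z₀` up to the source term `Y⁺_j`, so
`Y⁺ - (z - z₀) S` solves (2) at `z₀` from index `k` on. Such a solution is determined by two
consecutive values, hence is a left combination of `Q⁺` and `P⁺`. -/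

open Finset

theorem Matrix.exists_fromCols_mul_fromBlocks_eq {l m n R : Type*} [Fintype m] [Fintype n]
    [DecidableEq m] [DecidableEq n] [CommRing R]
    {A : Matrix m m R} {B : Matrix m n R} {C : Matrix n m R} {D : Matrix n n R}
    (h : IsUnit (fromBlocks A B C D)) (X₁ : Matrix l m R) (X₂ : Matrix l n R) :
    ∃ (C₁ : Matrix l m R) (C₂ : Matrix l n R), C₁ * A + C₂ * C = X₁ ∧ C₁ * B + C₂ * D = X₂ := by
  set W := fromCols X₁ X₂ * (fromBlocks A B C D)⁻¹
  refine ⟨W.toCols₁, W.toCols₂, fromCols_inj.eq_iff.mp ?_⟩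
  rw [← fromCols_mul_fromBlocks, fromCols_toCols, Matrix.nonsing_inv_mul_cancel_right _ _
    ((isUnit_iff_isUnit_det _).mp h)]

theorem eq_of_threeTerm_rec {𝕜 R : Type*} [Ring R] [SMul 𝕜 R] {A D B : ℕ → R}
    (hB : ∀ m, IsUnit (B m)) {z : 𝕜} {k : ℕ} {U V : ℕ → R}
    (hU : ∀ m, k ≤ m → U m * A m + U (m + 1) * D m + U (m + 2) * B m = z • U (m + 1))
    (hV : ∀ m, k ≤ m → V m * A m + V (m + 1) * D m + V (m + 2) * B m = z • V (m + 1))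
    (h₀ : U k = V k) (h₁ : U (k + 1) = V (k + 1)) :
    ∀ m, k ≤ m → U m = V m := by
  have key : ∀ i, U (k + i) = V (k + i) ∧ U (k + i + 1) = V (k + i + 1) := by
    intro i
    induction i with
    | zero => exact ⟨h₀, h₁⟩
    | succ i ih =>
      refine ⟨ih.2, (hB (k + i)).mul_right_cancel ?_⟩
      have hU' := hU (k + i) (by omega)
      have hV' := hV (k + i) (by omega)
      rw [ih.1, ih.2, ← hV'] at hU'
      exact add_left_cancel hU'
  intro m hm
  obtain ⟨i, rfl⟩ := Nat.exists_eq_add_of_le hm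
  exact (key i).1

def solEq2Submodule {n : ℕ} (d a b : ℕ → Mat n) (z : ℂ) : Submodule (Mat n) (ℕ → Mat n) where
  carrier := {Y | SolEq2 d a b z Y}
  add_mem' {U V} hU hV j := by
    simp only [Pi.add_apply, add_mul, smul_add]
    rw [← hU j, ← hV j]
    abel
  zero_mem' j := by simp
  smul_mem' C U hU j := by
    simp only [Pi.smul_apply, smul_eq_mul, mul_assoc, ← mul_add]
    rw [hU j, mul_smul_comm]

section Solutions

variable {n : ℕ} {d a b : ℕ → Mat n} {z : ℂ}

theorem isUnit_Alo (hb : ∀ j, IsUnit (b j)) : ∀ j, IsUnit (Alo b j)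
  | 0 => isUnit_one.neg
  | j + 1 => hb j

theorem SolEq2.wronskian_eq {U V : ℕ → Mat n} (hU : SolEq1 d a b z U) (hV : SolEq2 d a b z V)
    (j : ℕ) :
    V j * Aup a j * U (j + 1) - V (j + 1) * Alo b j * U j = V 1 * U 0 - V 0 * U 1 := by
  induction j with
  | zero => simp [Aup, Alo, neg_add_eq_sub]
  | succ j ih =>
    rw [← ih]
    have hVb : V (j + 2) * b j = z • V (j + 1) - V j * Aup a j - V (j + 1) * d j := by
      rw [← hV j]; abel
    have haU : a j * U (j + 2) = z • U (j + 1) - Alo b j * U j - d j * U (j + 1) := by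
      rw [← hU j]; abel
    calc V (j + 1) * a j * U (j + 2) - V (j + 2) * b j * U (j + 1)
        = V (j + 1) * (a j * U (j + 2)) - V (j + 2) * b j * U (j + 1) := by rw [mul_assoc]
      _ = V j * Aup a j * U (j + 1) - V (j + 1) * Alo b j * U j := by
          rw [hVb, haU]
          simp only [mul_sub, sub_mul, mul_smul_comm, smul_mul_assoc, mul_assoc]
          abel

structure FundamentalSystem (d a b : ℕ → Mat n) (z : ℂ) (P Q Pp Qp : ℕ → Mat n) : Prop where
  solEq1_P : SolEq1 d a b z P
  solEq1_Q : SolEq1 d a b z Q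
  solEq2_Pp : SolEq2 d a b z Pp
  solEq2_Qp : SolEq2 d a b z Qp
  P_zero : P 0 = 1
  P_one : P 1 = 0
  Q_zero : Q 0 = 0
  Q_one : Q 1 = 1
  Pp_zero : Pp 0 = 1
  Pp_one : Pp 1 = 0
  Qp_zero : Qp 0 = 0
  Qp_one : Qp 1 = 1

def greenKernel (P Q Pp Qp : ℕ → Mat n) (i j : ℕ) : Mat n := Q i * Pp j - P i * Qp j

def greenSum (P Q Pp Qp Y : ℕ → Mat n) (l m : ℕ) : Mat n :=
  ∑ i ∈ Ico l m, Y i * greenKernel P Q Pp Qp i m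

namespace FundamentalSystem

variable {P Q Pp Qp : ℕ → Mat n} (hF : FundamentalSystem d a b z P Q Pp Qp)
include hF

theorem fromBlocks_mul_fromBlocks_eq_one (j : ℕ) :
    fromBlocks (Qp j) (Qp (j + 1)) (Pp j) (Pp (j + 1)) *
      fromBlocks (Aup a j * P (j + 1)) (-(Aup a j * Q (j + 1)))
        (-(Alo b j * P j)) (Alo b j * Q j) = 1 := by
  have wPP := hF.solEq2_Pp.wronskian_eq hF.solEq1_P j
  have wQQ := hF.solEq2_Qp.wronskian_eq hF.solEq1_Q j
  have wPQ := hF.solEq2_Qp.wronskian_eq hF.solEq1_P j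
  have wQP := hF.solEq2_Pp.wronskian_eq hF.solEq1_Q j
  simp only [hF.P_zero, hF.P_one, hF.Q_zero, hF.Q_one, hF.Pp_zero, hF.Pp_one, hF.Qp_zero,
    hF.Qp_one, mul_zero, mul_one, sub_zero, zero_sub] at wPP wQQ wPQ wQP
  rw [fromBlocks_multiply, ← fromBlocks_one]
  congr 1
  · rw [← wPQ]; noncomm_ring
  · rw [← neg_zero, ← wQQ]; noncomm_ring
  · rw [← wPP]; noncomm_ring
  · rw [← neg_neg (1 : Mat n), ← wQP]; noncomm_ring

theorem isUnit_fromBlocks (j : ℕ) :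
    IsUnit (fromBlocks (Qp j) (Qp (j + 1)) (Pp j) (Pp (j + 1))) :=
  have h := hF.fromBlocks_mul_fromBlocks_eq_one j
  ⟨⟨_, _, h, mul_eq_one_comm.mp h⟩, rfl⟩

theorem greenKernel_self (hb : ∀ j, IsUnit (b j)) (j : ℕ) : greenKernel P Q Pp Qp j j = 0 := by
  have h := mul_eq_one_comm.mp (hF.fromBlocks_mul_fromBlocks_eq_one j)
  rw [fromBlocks_multiply, ← fromBlocks_one, fromBlocks_inj] at h
  refine (isUnit_Alo hb j).mul_left_cancel ?_
  rw [greenKernel, mul_zero, mul_sub, ← mul_assoc, ← mul_assoc, ← h.2.2.1]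
  noncomm_ring

theorem greenKernel_succ_mul (j : ℕ) : greenKernel P Q Pp Qp (j + 1) (j + 2) * b j = 1 := by
  have h := mul_eq_one_comm.mp (hF.fromBlocks_mul_fromBlocks_eq_one (j + 1))
  rw [fromBlocks_multiply, ← fromBlocks_one, fromBlocks_inj] at h
  rw [show Alo b (j + 1) = b j from rfl] at h
  rw [mul_eq_one_comm, ← h.2.2.2, greenKernel]
  noncomm_ring

theorem greenKernel_mem (i : ℕ) : greenKernel P Q Pp Qp i ∈ solEq2Submodule d a b z :=
  sub_mem (Submodule.smul_mem _ (Q i) hF.solEq2_Pp) (Submodule.smul_mem _ (P i) hF.solEq2_Qp)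

theorem greenSum_rec (hb : ∀ j, IsUnit (b j)) (Y : ℕ → Mat n) {l m : ℕ} (hlm : l ≤ m) :
    greenSum P Q Pp Qp Y l m * Aup a m + greenSum P Q Pp Qp Y l (m + 1) * d m
      + greenSum P Q Pp Qp Y l (m + 2) * b m
      = z • greenSum P Q Pp Qp Y l (m + 1) + Y (m + 1) := by
  set G : ℕ → Mat n := ∑ i ∈ Ico l (m + 1), Y i • greenKernel P Q Pp Qp i
  have hG : G ∈ solEq2Submodule d a b z :=
    Submodule.sum_mem _ fun i _ => Submodule.smul_mem _ _ (hF.greenKernel_mem i)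
  have hG_apply (j : ℕ) : G j = ∑ i ∈ Ico l (m + 1), Y i * greenKernel P Q Pp Qp i j := by
    simp only [G, Finset.sum_apply, Pi.smul_apply, smul_eq_mul]
  have e₀ : greenSum P Q Pp Qp Y l m = G m := by
    rw [hG_apply, sum_Ico_succ_top hlm, hF.greenKernel_self hb, mul_zero, add_zero, greenSum]
  have e₂ : greenSum P Q Pp Qp Y l (m + 2)
      = G (m + 2) + Y (m + 1) * greenKernel P Q Pp Qp (m + 1) (m + 2) := by
    rw [hG_apply, greenSum, sum_Ico_succ_top (by omega)]
  rw [e₀, e₂, show greenSum P Q Pp Qp Y l (m + 1) = G (m + 1) from (hG_apply _).symm, add_mul,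
    mul_assoc, hF.greenKernel_succ_mul, mul_one, ← add_assoc, hG m]

theorem sub_smul_greenSum_rec (hb : ∀ j, IsUnit (b j)) {z' : ℂ} {Y : ℕ → Mat n}
    (hY : SolEq2 d a b z' Y) {l : ℕ} {Z : ℕ → Mat n}
    (hZ : ∀ m, Z m = Y m - (z' - z) • greenSum P Q Pp Qp Y l m) {m : ℕ} (hlm : l ≤ m) :
    Z m * Aup a m + Z (m + 1) * d m + Z (m + 2) * b m = z • Z (m + 1) := by
  calc Z m * Aup a m + Z (m + 1) * d m + Z (m + 2) * b m
      = (Y m * Aup a m + Y (m + 1) * d m + Y (m + 2) * b m) - (z' - z) •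
          (greenSum P Q Pp Qp Y l m * Aup a m + greenSum P Q Pp Qp Y l (m + 1) * d m
            + greenSum P Q Pp Qp Y l (m + 2) * b m) := by
        simp only [hZ, sub_mul, smul_mul_assoc, smul_add]
        abel
    _ = z • Z (m + 1) := by
        rw [hY m, hF.greenSum_rec hb Y hlm, hZ]
        module

end FundamentalSystem

end Solutions

theorem statement8_general {n : ℕ} (d a b : ℕ → Mat n)
    (hb : ∀ j, IsUnit (b j)) (z z0 : ℂ)
    (P Q Pp Qp : ℕ → Mat n)
    (hP : SolEq1 d a b z0 P) (hQ : SolEq1 d a b z0 Q)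
    (hPp : SolEq2 d a b z0 Pp) (hQp : SolEq2 d a b z0 Qp)
    (hP0 : P 0 = 1) (hP1 : P 1 = 0) (hQ0 : Q 0 = 0) (hQ1 : Q 1 = 1)
    (hPp0 : Pp 0 = 1) (hPp1 : Pp 1 = 0) (hQp0 : Qp 0 = 0) (hQp1 : Qp 1 = 1)
    (Y : ℕ → Mat n) (hY : SolEq2 d a b z Y) (k : ℕ) :
    ∃ C1 C2 : Mat n, ∀ j : ℕ, k + 1 ≤ j →
      Y (j + 1) = C1 * Qp (j + 1) + C2 * Pp (j + 1) +
        (z - z0) • ∑ i ∈ Finset.Ico k j,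
          Y (i + 1) * (Q (i + 1) * Pp (j + 1) - P (i + 1) * Qp (j + 1)) := by
  have hF : FundamentalSystem d a b z0 P Q Pp Qp :=
    ⟨hP, hQ, hPp, hQp, hP0, hP1, hQ0, hQ1, hPp0, hPp1, hQp0, hQp1⟩
  set Z : ℕ → Mat n := fun m => Y m - (z - z0) • greenSum P Q Pp Qp Y (k + 1) m
  obtain ⟨C1, C2, h₁, h₂⟩ := Matrix.exists_fromCols_mul_fromBlocks_eq
    (hF.isUnit_fromBlocks (k + 1)) (Z (k + 1)) (Z (k + 2))
  have hC : C1 • Qp + C2 • Pp ∈ solEq2Submodule d a b z0 :=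
    add_mem (Submodule.smul_mem _ C1 hF.solEq2_Qp) (Submodule.smul_mem _ C2 hF.solEq2_Pp)
  have hCZ : ∀ m, k + 1 ≤ m → C1 * Qp m + C2 * Pp m = Z m :=
    eq_of_threeTerm_rec hb (fun m _ => hC m)
      (fun _ hm => hF.sub_smul_greenSum_rec hb hY (fun _ => rfl) hm) h₁ h₂
  refine ⟨C1, C2, fun j hj => ?_⟩
  have hsum : ∑ i ∈ Ico k j, Y (i + 1) * (Q (i + 1) * Pp (j + 1) - P (i + 1) * Qp (j + 1))
      = greenSum P Q Pp Qp Y (k + 1) (j + 1) :=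
    sum_Ico_add' (fun i => Y i * greenKernel P Q Pp Qp i (j + 1)) k j 1
  rw [hsum, hCZ (j + 1) (by omega)]
  simp only [Z, sub_add_cancel]

/-- representation (rep2): any solution `Y⁺` of equation (2) at `z` can be
represented via the fundamental solutions at `z₀`. -/
theorem statement8 {n : ℕ} (hn : 1 ≤ n) (d a b : ℕ → Mat n)
    (ha : ∀ j, IsUnit (a j)) (hb : ∀ j, IsUnit (b j)) (z z0 : ℂ)
    (P Q Pp Qp : ℕ → Mat n)
    (hP : SolEq1 d a b z0 P) (hQ : SolEq1 d a b z0 Q)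
    (hPp : SolEq2 d a b z0 Pp) (hQp : SolEq2 d a b z0 Qp)
    (hP0 : P 0 = 1) (hP1 : P 1 = 0) (hQ0 : Q 0 = 0) (hQ1 : Q 1 = 1)
    (hPp0 : Pp 0 = 1) (hPp1 : Pp 1 = 0) (hQp0 : Qp 0 = 0) (hQp1 : Qp 1 = 1)
    (Y : ℕ → Mat n) (hY : SolEq2 d a b z Y) (k : ℕ) :
    ∃ C1 C2 : Mat n, ∀ j : ℕ, k + 1 ≤ j →
      Y (j + 1) = C1 * Qp (j + 1) + C2 * Pp (j + 1) +
        (z - z0) • ∑ i ∈ Finset.Ico k j,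
          Y (i + 1) * (Q (i + 1) * Pp (j + 1) - P (i + 1) * Qp (j + 1)) :=
  statement8_general d a b hb z z0 P Q Pp Qp hP hQ hPp hQp hP0 hP1 hQ0 hQ1 hPp0 hPp1 hQp0 hQp1 Y hY
    k
end

section
/- For the specific coefficients with n = 2, A_{j,j} = O and A_{j,j+1} = A_{j+1,j} = (j+1)·E (j ≥ 0), the matrix polynomials at z = 0 are given explicitly for all m ≥ 0 by: Q_{2m+1}(0) = O, Q_{2m}(0) = (−1)^m · (∏_{k=1}^{m} (2k−1)/(2k)) · E, P_{2m}(0) = O, and P_{2m+1}(0) = (−1)^m · (∏_{k=1}^{m} (2k)/(2k+1)) · E (empty products equal 1). -/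
open Matrix Filter
open scoped BigOperators ENNReal

/-! With zero diagonal and `z = 0`, equation (1) at paper index `j` reads
`A_{j,j-1} Y_{j-1} + A_{j,j+1} Y_{j+1} = 0`, so it links only indices of equal parity. For scalar
coefficients `c_j E` this gives `Y_{j+1} = -(c_{j-1}/c_j) Y_{j-1}`, hence each parity class is a
product of these ratios times its initial value, and the class started from a zero initial value
vanishes. -/

lemma eq_prod_smul_of_two_step {R M : Type*} [CommMonoid R] [MulAction R M]
    {Y : ℕ → M} {r : ℕ → R} (h : ∀ j, Y (j + 2) = r j • Y j) (i m : ℕ) :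
    Y (2 * m + i) = (∏ k ∈ Finset.range m, r (2 * k + i)) • Y i := by
  induction m with
  | zero => simp
  | succ m ih =>
    rw [show 2 * (m + 1) + i = 2 * m + i + 2 by omega, h, ih, Finset.prod_range_succ,
      smul_smul, mul_comm]

namespace SolEq1

variable {n : ℕ} {c : ℕ → ℂ} {Y : ℕ → Mat n}
  (h : SolEq1 (fun _ => 0) (fun j => c j • 1) (fun j => c j • 1) 0 Y)
include h

theorem smul_at_two_eq_at_zero : c 0 • Y 2 = Y 0 := by
  have H := h 0
  simp only [Alo, neg_one_mul, zero_mul, add_zero, smul_mul_assoc, one_mul, zero_smul] at H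
  linear_combination (norm := module) H

theorem add_three_eq_smul_add_one {j : ℕ} (hc : c (j + 1) ≠ 0) :
    Y (j + 3) = -(c j / c (j + 1)) • Y (j + 1) := by
  have H := h (j + 1)
  simp only [Alo, zero_mul, add_zero, smul_mul_assoc, one_mul, zero_smul] at H
  rw [show j + 1 + 2 = j + 3 from rfl] at H
  refine smul_right_injective _ hc ?_
  beta_reduce
  rw [smul_smul, mul_neg, mul_div_cancel₀ _ hc]
  linear_combination (norm := module) H

theorem two_mul_add_succ_eq_prod_smul (hc : ∀ j, c j ≠ 0) (i m : ℕ) :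
    Y (2 * m + i + 1) =
      (∏ k ∈ Finset.range m, -(c (2 * k + i) / c (2 * k + i + 1))) • Y (i + 1) :=
  eq_prod_smul_of_two_step (Y := fun j => Y (j + 1))
    (fun _ => h.add_three_eq_smul_add_one (hc _)) i m

end SolEq1

/-- explicit formulas for `P_j(0)` and `Q_j(0)` for the coefficients
`A_{j,j} = O`, `A_{j,j+1} = A_{j+1,j} = (j+1)E` with `n = 2`. -/
theorem statement15
    (P Q : ℕ → Mat 2)
    (hP : SolEq1 (fun _ => 0) (fun j => ((j : ℂ) + 1) • 1) (fun j => ((j : ℂ) + 1) • 1)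
      (0 : ℂ) P)
    (hQ : SolEq1 (fun _ => 0) (fun j => ((j : ℂ) + 1) • 1) (fun j => ((j : ℂ) + 1) • 1)
      (0 : ℂ) Q)
    (hP0 : P 0 = 1) (hP1 : P 1 = 0) (hQ0 : Q 0 = 0) (hQ1 : Q 1 = 1) :
    ∀ m : ℕ,
      Q (2 * m + 2) = 0 ∧
      Q (2 * m + 1) =
        ((-1 : ℂ) ^ m * ∏ k ∈ Finset.range m, (2 * (k : ℂ) + 1) / (2 * (k : ℂ) + 2)) •
          (1 : Mat 2) ∧
      P (2 * m + 1) = 0 ∧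
      P (2 * m + 2) =
        ((-1 : ℂ) ^ m * ∏ k ∈ Finset.range m, (2 * (k : ℂ) + 2) / (2 * (k : ℂ) + 3)) •
          (1 : Mat 2) := by
  intro m
  have hc (j : ℕ) : (j : ℂ) + 1 ≠ 0 := by exact_mod_cast j.succ_ne_zero
  have hQ2 : Q 2 = 0 := by simpa [hQ0] using hQ.smul_at_two_eq_at_zero
  have hP2 : P 2 = 1 := by simpa [hP0] using hP.smul_at_two_eq_at_zero
  refine ⟨by simp [hQ.two_mul_add_succ_eq_prod_smul hc 1 m, hQ2], ?_,
    by simp [hP.two_mul_add_succ_eq_prod_smul hc 0 m, hP1], ?_⟩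
  · rw [show 2 * m + 1 = 2 * m + 0 + 1 from rfl, hQ.two_mul_add_succ_eq_prod_smul hc 0 m, hQ1,
      Finset.prod_neg, Finset.card_range]
    congr 2
    refine Finset.prod_congr rfl fun k _ => ?_
    push_cast
    ring
  · rw [hP.two_mul_add_succ_eq_prod_smul hc 1 m, hP2, Finset.prod_neg, Finset.card_range]
    congr 2
    refine Finset.prod_congr rfl fun k _ => ?_
    push_cast
    ring
end

section
/- For the specific coefficients with n = 2, A_{j,j} = O and A_{j,j+1} = A_{j+1,j} = (j+1)·E (j ≥ 0), every solution of the vector equation (1v) at z = 0 belongs to l^p_2 for every p > 2. -/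
/-!
At `z = 0`, in the indexing of `SolEq1v`, the equation decouples into
`j u_j + (j + 1) u_{j+2} = 0`, so `‖u_{j+2}‖ / ‖u_j‖ = j / (j + 1)` is a Wallis-type ratio.
Since `j (j + 2) ≤ (j + 1)²`, the quantity `j ‖u_j‖²` does not increase along each parity class,
hence `‖u_j‖ = O(j^{-1/2})` and `‖u_j‖^p = O(j^{-p/2})` is summable for `p > 2`.
-/

open Matrix Filter
open scoped BigOperators ENNReal

lemma le_max_of_forall_add_two_le {g : ℕ → ℝ} (hg : ∀ k, g (k + 2) ≤ g k) (k : ℕ) :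
    g k ≤ max (g 0) (g 1) := by
  induction k using Nat.twoStepInduction with
  | zero => exact le_max_left _ _
  | one => exact le_max_right _ _
  | more k ih _ => exact (hg k).trans ih

lemma sq_mul_add_two_le {y : ℕ → ℝ} (hy : ∀ k, 0 ≤ y k)
    (hrec : ∀ k : ℕ, ((k : ℝ) + 2) * y (k + 2) ≤ ((k : ℝ) + 1) * y k) (k : ℕ) :
    y (k + 2) ^ 2 * ((k : ℝ) + 3) ≤ y k ^ 2 * ((k : ℝ) + 1) := by
  have hsq : (((k : ℝ) + 2) * y (k + 2)) ^ 2 ≤ (((k : ℝ) + 1) * y k) ^ 2 :=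
    pow_le_pow_left₀ (mul_nonneg (by positivity) (hy _)) (hrec k) 2
  have hk : (0 : ℝ) < (k : ℝ) + 1 := by positivity
  refine le_of_mul_le_mul_right ?_ hk
  nlinarith [sq_nonneg (y (k + 2))]

lemma sq_mul_succ_le_max {y : ℕ → ℝ} (hy : ∀ k, 0 ≤ y k)
    (hrec : ∀ k : ℕ, ((k : ℝ) + 2) * y (k + 2) ≤ ((k : ℝ) + 1) * y k) (k : ℕ) :
    y k ^ 2 * ((k : ℝ) + 1) ≤ max (y 0 ^ 2) (y 1 ^ 2 * 2) := by
  have h := le_max_of_forall_add_two_le (g := fun k => y k ^ 2 * ((k : ℝ) + 1))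
    (fun k => by push_cast; linarith [sq_mul_add_two_le hy hrec k]) k
  convert h using 2 <;> norm_num

lemma summable_rpow_of_sq_mul_succ_le {y : ℕ → ℝ} (hy : ∀ k, 0 ≤ y k) {B : ℝ}
    (hB : ∀ k : ℕ, y k ^ 2 * ((k : ℝ) + 1) ≤ B) {p : ℝ} (hp : 2 < p) :
    Summable fun k => y k ^ p := by
  have hB0 : 0 ≤ B := (by positivity : 0 ≤ y 0 ^ 2 * ((0 : ℕ) + 1 : ℝ)).trans (hB 0)
  have hbound : ∀ k : ℕ, y k ^ p ≤ B ^ (p / 2) * (1 / |(k : ℝ) + 1| ^ (p / 2)) := by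
    intro k
    have hk : (0 : ℝ) < (k : ℝ) + 1 := by positivity
    have hsq : y k ^ 2 ≤ B / ((k : ℝ) + 1) := (le_div_iff₀ hk).2 (hB k)
    calc y k ^ p = (y k ^ 2) ^ (p / 2) := by
          rw [← Real.rpow_natCast, ← Real.rpow_mul (hy k)]; ring_nf
      _ ≤ (B / ((k : ℝ) + 1)) ^ (p / 2) :=
          Real.rpow_le_rpow (by positivity) hsq (by linarith)
      _ = B ^ (p / 2) * (1 / |(k : ℝ) + 1| ^ (p / 2)) := by
          rw [Real.div_rpow hB0 hk.le, abs_of_pos hk, mul_one_div]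
  exact Summable.of_nonneg_of_le (fun k => Real.rpow_nonneg (hy k) p) hbound
    (((Real.summable_one_div_nat_add_rpow 1 (p / 2)).2 (by linarith)).mul_left _)

lemma norm_recurrence_of_solEq1v {n : ℕ} {u : ℕ → Fin n → ℂ}
    (hu : SolEq1v (fun _ => 0) (fun j => ((j : ℂ) + 1) • 1) (fun j => ((j : ℂ) + 1) • 1) 0 u)
    (k : ℕ) : ((k : ℝ) + 2) * ‖u (k + 3)‖ = ((k : ℝ) + 1) * ‖u (k + 1)‖ := by
  have hvec : ((k : ℂ) + 2) • u (k + 3) = -(((k : ℂ) + 1) • u (k + 1)) := by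
    have h := hu (k + 1)
    simp only [Alo, Matrix.smul_mulVec, Matrix.one_mulVec, Matrix.zero_mulVec, add_zero,
      zero_smul] at h
    push_cast at h
    rw [eq_neg_iff_add_eq_zero, add_comm, ← h]
    ring_nf
  have hnorm := congrArg norm hvec
  rw [norm_neg, norm_smul, norm_smul] at hnorm
  have h2 : ‖(k : ℂ) + 2‖ = (k : ℝ) + 2 := by exact_mod_cast Complex.norm_natCast (k + 2)
  have h1 : ‖(k : ℂ) + 1‖ = (k : ℝ) + 1 := by exact_mod_cast Complex.norm_natCast (k + 1)
  rwa [h1, h2] at hnorm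

/-- for the coefficients `A_{j,j} = O`, `A_{j,j+1} = A_{j+1,j} = (j+1)E`
with `n = 2`, every solution of (1v) at `z = 0` is in `l^p_2` for every `p > 2`. -/
theorem statement16 :
    ∀ p : ℝ, 2 < p →
      ∀ u : ℕ → Fin 2 → ℂ,
        SolEq1v (fun _ => 0) (fun j => ((j : ℂ) + 1) • 1) (fun j => ((j : ℂ) + 1) • 1)
          (0 : ℂ) u →
        Summable (fun j : ℕ => ‖u j‖ ^ p) := by
  intro p hp u hu
  have hrec : ∀ k : ℕ, ((k : ℝ) + 2) * ‖u (k + 2 + 1)‖ ≤ ((k : ℝ) + 1) * ‖u (k + 1)‖ :=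
    fun k => (norm_recurrence_of_solEq1v hu k).le
  have hB := sq_mul_succ_le_max (y := fun k => ‖u (k + 1)‖) (fun _ => norm_nonneg _) hrec
  exact (summable_nat_add_iff 1).1
    (summable_rpow_of_sq_mul_succ_le (fun _ => norm_nonneg _) hB hp)
end

section
/- For the specific coefficients with n = 2, A_{j,j} = O and A_{j,j+1} = A_{j+1,j} = (j+1)·E (j ≥ 0), and for any nonzero vector v ∈ ℂ², the sequence defined by u_{−1} = 0 and u_j = i^j·v for j ≥ 0 (i the imaginary unit) is a solution of the vector equation (1v) at z = i; it satisfies sup_j |u_j| < ∞ but |u_j| does not tend to 0 as j → ∞, and consequently it does not belong to l^p_2 for any finite p ≥ 1. -/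
/-! Since `i ^ (j + 2) = -i ^ j`, the terms `(j + 1) i ^ j` and `(j + 2) i ^ (j + 2)` of (1v) cancel
up to `-i ^ j = i * i ^ (j + 1)`. From index `0` on, `‖u_j‖ = ‖v‖ > 0` is constant, so neither
`‖u_j‖` nor `‖u_j‖ ^ p` tends to `0`, and no series `∑ ‖u_j‖ ^ p` converges. -/

open Matrix Filter
open scoped BigOperators ENNReal

lemma not_tendsto_of_succ_eq {X : Type*} [TopologicalSpace X] [T2Space X] {f : ℕ → X}
    {a c : X} (hc : c ≠ a) (hf : ∀ j, f (j + 1) = c) : ¬ Tendsto f atTop (nhds a) := by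
  rw [← tendsto_add_atTop_iff_nat 1]
  simpa only [hf, tendsto_const_nhds_iff] using hc

lemma I_pow_solves_recurrence (j : ℕ) :
    ((j : ℂ) + 1) * Complex.I ^ j + ((j : ℂ) + 2) * Complex.I ^ (j + 2)
      = Complex.I * Complex.I ^ (j + 1) := by
  linear_combination ((j : ℂ) + 1) * Complex.I ^ j * Complex.I_sq

lemma solEq1v_I_pow_smul {n : ℕ} (v : Fin n → ℂ) (u : ℕ → Fin n → ℂ) (hu0 : u 0 = 0)
    (huj : ∀ j : ℕ, u (j + 1) = Complex.I ^ j • v) :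
    SolEq1v (fun _ => 0) (fun j => ((j : ℂ) + 1) • 1) (fun j => ((j : ℂ) + 1) • 1)
      Complex.I u := by
  rintro (_ | j)
  · simp [Alo, hu0, huj]
  · simp only [Alo, huj, Matrix.smul_mulVec, Matrix.one_mulVec, Matrix.zero_mulVec, add_zero,
      smul_smul, ← add_smul]
    push_cast
    rw [add_assoc (j : ℂ) 1 1, one_add_one_eq_two, I_pow_solves_recurrence]

/-- for the coefficients `A_{j,j} = O`, `A_{j,j+1} = A_{j+1,j} = (j+1)E`
with `n = 2` and any nonzero `v ∈ ℂ²`, the sequence `u_{-1} = 0`, `u_j = i^j v` (`j ≥ 0`)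
solves (1v) at `z = i`; it is bounded, its norm does not tend to `0`, and it is not in
`l^p_2` for any finite `p ≥ 1`. -/
theorem statement17 (v : Fin 2 → ℂ) (hv : v ≠ 0)
    (u : ℕ → Fin 2 → ℂ) (hu0 : u 0 = 0)
    (huj : ∀ j : ℕ, u (j + 1) = Complex.I ^ j • v) :
    SolEq1v (fun _ => 0) (fun j => ((j : ℂ) + 1) • 1) (fun j => ((j : ℂ) + 1) • 1)
      Complex.I u ∧
    (∃ C : ℝ, ∀ j : ℕ, ‖u j‖ ≤ C) ∧
    ¬ Tendsto (fun j : ℕ => ‖u j‖) atTop (nhds 0) ∧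
    ∀ p : ℝ, 1 ≤ p → ¬ Summable (fun j : ℕ => ‖u j‖ ^ p) := by
  have hnorm : ∀ j : ℕ, ‖u (j + 1)‖ = ‖v‖ := fun j => by
    rw [huj, norm_smul, norm_pow, Complex.norm_I, one_pow, one_mul]
  have hv_pos : 0 < ‖v‖ := norm_pos_iff.mpr hv
  refine ⟨solEq1v_I_pow_smul v u hu0 huj, ⟨‖v‖, ?_⟩, not_tendsto_of_succ_eq hv_pos.ne' hnorm,
    fun p _ hsum => ?_⟩
  · rintro (_ | j)
    · simp [hu0, hv_pos.le]
    · exact (hnorm j).le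
  · exact not_tendsto_of_succ_eq (Real.rpow_pos_of_pos hv_pos p).ne'
      (fun j => by rw [hnorm]) hsum.tendsto_atTop_zero
end

section
/- (Theorem 4: Theorem 3 fails for p > 2.) For every p with 2 < p < ∞ there exist n ≥ 1 and coefficients A_{j,j}, A_{j,j+1}, A_{j+1,j} satisfying the symmetry condition (simm), together with z_0 ∈ ℝ, such that every solution of the vector equation (1v) at z_0 belongs to l^p_n, while there exist z ∈ ℂ and a solution of (1v) at z that does not belong to l^p_n. -/
open Matrix Filter
open scoped BigOperators ENNReal ComplexOrder

/-! Take `n = 1`, `A_{j,j} = 0` and `A_{j,j+1} = A_{j+1,j} = j + 1`. At `z = 0` equation (1v)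
reads `j u_{j-1} + (j+1) u_{j+1} = 0` for `j ≥ 1`, so `|u_{j+1}| = j/(j+1) · |u_{j-1}|`. Since
`j(j+2) ≤ (j+1)²`, the quantity `(k+1)|u_k|²` does not increase in steps of two; hence every
solution is `O(k^{-1/2})` and lies in `l^p` for `p > 2`. At `z = i` the sequence
`u_{-1} = 0, u_k = i^{k+1}` is a solution of constant norm. -/

lemma mul_sq_le_of_two_step_decay {g : ℕ → ℝ} (hg : ∀ j, 0 ≤ g j)
    (hrec : ∀ j : ℕ, ((j : ℝ) + 2) * g (j + 3) ≤ ((j : ℝ) + 1) * g (j + 1)) (m : ℕ) :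
    ((m : ℝ) + 1) * g (m + 1) ^ 2 ≤ g 1 ^ 2 + 2 * g 2 ^ 2 := by
  have step (j : ℕ) : ((j : ℝ) + 3) * g (j + 3) ^ 2 ≤ ((j : ℝ) + 1) * g (j + 1) ^ 2 := by
    have hsq : ((j : ℝ) + 2) ^ 2 * g (j + 3) ^ 2 ≤ ((j : ℝ) + 1) ^ 2 * g (j + 1) ^ 2 := by
      rw [← mul_pow, ← mul_pow]
      exact pow_le_pow_left₀ (mul_nonneg (by positivity) (hg _)) (hrec j) 2
    refine le_of_mul_le_mul_left ?_ (by positivity : (0 : ℝ) < (j : ℝ) + 1)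
    nlinarith [sq_nonneg (g (j + 3))]
  induction m using Nat.twoStepInduction with
  | zero => norm_num; positivity
  | one => norm_num; nlinarith [sq_nonneg (g 1)]
  | more m ih _ =>
    push_cast
    linarith [step m]

lemma summable_rpow_of_mul_sq_le {f : ℕ → ℝ} (hf : ∀ j, 0 ≤ f j) {C : ℝ}
    (hC : ∀ m : ℕ, ((m : ℝ) + 1) * f (m + 1) ^ 2 ≤ C) {p : ℝ} (hp : 2 < p) :
    Summable fun j => f j ^ p := by
  have hC0 : 0 ≤ C := (by positivity : 0 ≤ ((0 : ℕ) + 1 : ℝ) * f (0 + 1) ^ 2).trans (hC 0)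
  rw [← summable_nat_add_iff 1]
  have hs : Summable fun m : ℕ => C ^ (p / 2) * (1 / ((m + 1 : ℕ) : ℝ) ^ (p / 2)) :=
    ((summable_nat_add_iff 1).mpr
      (Real.summable_one_div_nat_rpow.mpr (by linarith))).mul_left _
  refine hs.of_nonneg_of_le (fun m => Real.rpow_nonneg (hf _) p) fun m => ?_
  have hm : (0 : ℝ) < (m + 1 : ℕ) := by positivity
  calc f (m + 1) ^ p = (f (m + 1) ^ 2) ^ (p / 2) := by
        rw [← Real.rpow_natCast, ← Real.rpow_mul (hf _), Nat.cast_ofNat,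
          mul_div_cancel₀ p two_ne_zero]
    _ ≤ (C / (m + 1 : ℕ)) ^ (p / 2) := by
        refine Real.rpow_le_rpow (by positivity) ?_ (by linarith)
        rw [le_div_iff₀ hm]; push_cast; linarith [hC m]
    _ = C ^ (p / 2) * (1 / ((m + 1 : ℕ) : ℝ) ^ (p / 2)) := by
        rw [Real.div_rpow hC0 hm.le]; ring

def linearCoeff (n : ℕ) : ℕ → Mat n := fun j => ((j + 1 : ℕ) : Mat n)

lemma linearCoeff_posDef (n j : ℕ) : (linearCoeff n j).PosDef :=
  Matrix.PosDef.natCast (j + 1) j.succ_ne_zero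

lemma norm_recurrence_of_solEq1v_zero {n : ℕ} {u : ℕ → Fin n → ℂ}
    (hu : SolEq1v 0 (linearCoeff n) (linearCoeff n) 0 u)
    (j : ℕ) : ((j : ℝ) + 2) * ‖u (j + 3)‖ = ((j : ℝ) + 1) * ‖u (j + 1)‖ := by
  have h := hu (j + 1)
  simp only [Alo, linearCoeff, Pi.zero_apply, zero_mulVec, natCast_mulVec, add_zero,
    zero_smul] at h
  have h' := congrArg norm (eq_neg_of_add_eq_zero_right h)
  rw [norm_neg, norm_smul, norm_smul, RCLike.norm_natCast, RCLike.norm_natCast] at h'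
  push_cast at h'
  linarith

lemma summable_norm_rpow_of_solEq1v_zero {n : ℕ} {u : ℕ → Fin n → ℂ}
    (hu : SolEq1v 0 (linearCoeff n) (linearCoeff n) 0 u) {p : ℝ} (hp : 2 < p) :
    Summable fun j => ‖u j‖ ^ p :=
  summable_rpow_of_mul_sq_le (fun _ => norm_nonneg _)
    (mul_sq_le_of_two_step_decay (fun _ => norm_nonneg _)
      fun j => (norm_recurrence_of_solEq1v_zero hu j).le) hp

def rotatingSolution (n : ℕ) : ℕ → Fin n → ℂ := fun j _ => if j = 0 then 0 else Complex.I ^ j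

lemma solEq1v_rotatingSolution (n : ℕ) :
    SolEq1v 0 (linearCoeff n) (linearCoeff n) Complex.I (rotatingSolution n) := by
  rintro (_ | j) <;> funext x
  · simp [Alo, neg_mulVec, linearCoeff, rotatingSolution]
  · simp only [Alo, linearCoeff, rotatingSolution, Pi.zero_apply, zero_mulVec, natCast_mulVec,
      Pi.add_apply, Pi.smul_apply, smul_eq_mul, Nat.succ_ne_zero, if_false, add_zero]
    push_cast
    linear_combination ((j : ℂ) + 1) * Complex.I ^ (j + 1) * Complex.I_sq

lemma not_summable_norm_rpow_rotatingSolution (n : ℕ) [NeZero n] (p : ℝ) :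
    ¬ Summable fun j => ‖rotatingSolution n j‖ ^ p := by
  rw [← summable_nat_add_iff 1]
  have hconst : (fun j => ‖rotatingSolution n (j + 1)‖ ^ p) = fun _ => (1 : ℝ) := by
    funext j
    unfold rotatingSolution
    simp [pi_norm_const]
  rw [hconst, summable_const_iff]
  exact one_ne_zero

/-- Theorem 4: Theorem 3 fails for `p > 2`: for every `2 < p < ∞` there
are coefficients satisfying (simm) and a real `z₀` such that all solutions of (1v) at
`z₀` are in `l^p_n`, while at some `z ∈ ℂ` there is a solution not in `l^p_n`. -/
theorem statement18 :
    ∀ p : ℝ, 2 < p →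
      ∃ (n : ℕ), 1 ≤ n ∧
        ∃ d a b : ℕ → Mat n,
          (∀ j, IsUnit (a j)) ∧ (∀ j, IsUnit (b j)) ∧
          (∀ j, (d j).IsHermitian) ∧ (∀ j, b j = a j) ∧ (∀ j, (a j).PosDef) ∧
          ∃ z0 : ℝ,
            (∀ u : ℕ → Fin n → ℂ, SolEq1v d a b (z0 : ℂ) u →
              Summable (fun j : ℕ => ‖u j‖ ^ p)) ∧
            ∃ (z : ℂ) (u : ℕ → Fin n → ℂ),
              SolEq1v d a b z u ∧ ¬ Summable (fun j : ℕ => ‖u j‖ ^ p) := by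
  intro p hp
  refine ⟨1, le_rfl, 0, linearCoeff 1, linearCoeff 1, fun j => (linearCoeff_posDef 1 j).isUnit,
    fun j => (linearCoeff_posDef 1 j).isUnit, fun _ => isHermitian_zero, fun _ => rfl,
    linearCoeff_posDef 1, 0, fun u hu => ?_, Complex.I, rotatingSolution 1,
    solEq1v_rotatingSolution 1, not_summable_norm_rpow_rotatingSolution 1 p⟩
  rw [Complex.ofReal_zero] at hu
  exact summable_norm_rpow_of_solEq1v_zero hu hp
end

section
/- (Scalar Hellinger theorem, pointwise form.) Let (a_i)_{i ≥ 0} and (b_i)_{i ≥ 1} be sequences of complex numbers with a_i ≠ 0 for all i. Suppose that for some z_0 ∈ ℂ every solution (u_i)_{i ≥ 0} of the scalar three-term recurrence a_{i−1}u_{i−1} + b_i u_i + a_i u_{i+1} = z·u_i (i ≥ 1) at z = z_0 satisfies Σ_{i ≥ 0} |u_i|² < ∞. Then for every z ∈ ℂ, every solution of the same recurrence at z satisfies Σ_{i ≥ 0} |u_i|² < ∞. -/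
/-!
Let `φ, ψ` be the solutions at `z₀` with Wronskian `1`; by hypothesis they are square summable,
hence so is `f = |φ| + |ψ|`. By variation of constants, a solution `u` at `z` agrees on `[m, ∞)`
with `r + ∑_{m ≤ k < n} G(n, k) (z - z₀) u_k`, where `r` is a solution at `z₀` (so `r ∈ ℓ²`) and
the Green kernel satisfies `|G(n, k)| ≤ f_n f_k`. Choosing `m` with
`|z - z₀| ∑_{k ≥ m} f_k² ≤ 1/2`, a discrete Gronwall argument bounds `∑_{k ≥ m} |u_k|²` by
`4 ∑ |r_k|²`.
-/

open Finset

theorem Summable.sq_add {ι : Type*} {f g : ι → ℝ} (hf : Summable fun i => f i ^ 2)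
    (hg : Summable fun i => g i ^ 2) : Summable fun i => (f i + g i) ^ 2 :=
  ((hf.add hg).mul_left 2).of_nonneg_of_le (fun _ => sq_nonneg _) fun _ => add_sq_le

theorem Summable.exists_forall_sum_Ico_le {g : ℕ → ℝ} (hg : Summable g) {η : ℝ} (hη : 0 < η) :
    ∃ m, ∀ n, ∑ k ∈ Ico m n, g k ≤ η := by
  obtain ⟨s, hs⟩ := hg.vanishing (Iic_mem_nhds hη)
  refine ⟨s.sup id + 1, fun n => hs _ ?_⟩
  refine Finset.disjoint_left.mpr fun k hk hks => ?_
  have : k ≤ s.sup id := Finset.le_sup (f := id) hks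
  simp only [Finset.mem_Ico] at hk
  omega

/-- By Cauchy–Schwarz, the partial sums `S = ∑_{m ≤ k < N} x k ^ 2` satisfy
`S ≤ 2 ∑ g² + 2 (ε D)² S` with `D = ∑_{m ≤ k < N} f k ^ 2`, and `2 (ε D)² ≤ 1/2`. -/
theorem summable_sq_of_le_add_volterra {f g x : ℕ → ℝ} {ε : ℝ} {m : ℕ} (hx : ∀ n, 0 ≤ x n)
    (hε : 0 ≤ ε) (hg : Summable fun n => g n ^ 2)
    (hsmall : ∀ n, ε * ∑ k ∈ Ico m n, f k ^ 2 ≤ 1 / 2)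
    (hle : ∀ n, m ≤ n → x n ≤ g n + ε * f n * ∑ k ∈ Ico m n, f k * x k) :
    Summable fun n => x n ^ 2 := by
  have hpartial : ∀ N, ∑ k ∈ Ico m N, x k ^ 2 ≤ 4 * ∑' n, g n ^ 2 := by
    intro N
    set S := ∑ k ∈ Ico m N, x k ^ 2
    set D := ∑ k ∈ Ico m N, f k ^ 2
    have hD : 0 ≤ ε * D := mul_nonneg hε (sum_nonneg fun _ _ => sq_nonneg _)
    have hterm : ∀ k ∈ Ico m N, x k ^ 2 ≤ 2 * g k ^ 2 + 2 * (ε * f k) ^ 2 * (D * S) := by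
      intro k hk
      obtain ⟨hmk, hkN⟩ := Finset.mem_Ico.mp hk
      have hsub : Ico m k ⊆ Ico m N := Ico_subset_Ico_right hkN.le
      have hCS : (∑ j ∈ Ico m k, f j * x j) ^ 2 ≤ D * S :=
        (sum_mul_sq_le_sq_mul_sq _ _ _).trans <| mul_le_mul
          (sum_le_sum_of_subset_of_nonneg hsub fun _ _ _ => sq_nonneg _)
          (sum_le_sum_of_subset_of_nonneg hsub fun _ _ _ => sq_nonneg _)
          (sum_nonneg fun _ _ => sq_nonneg _) (sum_nonneg fun _ _ => sq_nonneg _)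
      calc x k ^ 2 ≤ (g k + ε * f k * ∑ j ∈ Ico m k, f j * x j) ^ 2 :=
            pow_le_pow_left₀ (hx k) (hle k hmk) 2
        _ ≤ 2 * (g k ^ 2 + (ε * f k * ∑ j ∈ Ico m k, f j * x j) ^ 2) := add_sq_le
        _ ≤ 2 * g k ^ 2 + 2 * (ε * f k) ^ 2 * (D * S) := by
            rw [mul_pow]; nlinarith [sq_nonneg (ε * f k)]
    have hS : S ≤ 2 * ∑' n, g n ^ 2 + 2 * (ε * D) ^ 2 * S :=
      calc S ≤ ∑ k ∈ Ico m N, (2 * g k ^ 2 + 2 * (ε * f k) ^ 2 * (D * S)) := sum_le_sum hterm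
        _ = 2 * ∑ k ∈ Ico m N, g k ^ 2 + 2 * (ε * D) ^ 2 * S := by
            simp only [sum_add_distrib, ← mul_sum, ← sum_mul, mul_pow, D]; ring
        _ ≤ 2 * ∑' n, g n ^ 2 + 2 * (ε * D) ^ 2 * S := by
            gcongr; exact hg.sum_le_tsum _ fun _ _ => sq_nonneg _
    have hS0 : 0 ≤ S := sum_nonneg fun _ _ => sq_nonneg _
    nlinarith [hsmall N, mul_le_mul (hsmall N) (hsmall N) hD (by norm_num)]
  refine summable_of_sum_range_le (c := ∑ k ∈ range m, x k ^ 2 + 4 * ∑' n, g n ^ 2)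
    (fun _ => sq_nonneg _) fun n => ?_
  calc ∑ k ∈ range n, x k ^ 2 ≤ ∑ k ∈ range (n + m), x k ^ 2 :=
        sum_le_sum_of_subset_of_nonneg (range_subset_range.mpr (Nat.le_add_right n m))
          fun _ _ _ => sq_nonneg _
    _ = ∑ k ∈ range m, x k ^ 2 + ∑ k ∈ Ico m (n + m), x k ^ 2 :=
        (sum_range_add_sum_Ico _ (Nat.le_add_left m n)).symm
    _ ≤ _ := add_le_add_right (hpartial _) _

namespace ThreeTermRecurrence

variable (a b : ℕ → ℂ) (z : ℂ)

def IsSol (u : ℕ → ℂ) : Prop :=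
  ∀ n, a n * u n + b (n + 1) * u (n + 1) + a (n + 1) * u (n + 2) = z * u (n + 1)

def IsSolFrom (m : ℕ) (u : ℕ → ℂ) : Prop :=
  ∀ n, m ≤ n → a n * u n + b (n + 1) * u (n + 1) + a (n + 1) * u (n + 2) = z * u (n + 1)

noncomputable def solOfInit (c₀ c₁ : ℂ) : ℕ → ℂ
  | 0 => c₀
  | 1 => c₁
  | n + 2 => ((z - b (n + 1)) * solOfInit c₀ c₁ (n + 1) - a n * solOfInit c₀ c₁ n) / a (n + 1)

noncomputable def phi : ℕ → ℂ := solOfInit a b z 1 0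

noncomputable def psi : ℕ → ℂ := solOfInit a b z 0 (a 0)⁻¹

def wronskian (u v : ℕ → ℂ) (n : ℕ) : ℂ := a n * (u n * v (n + 1) - u (n + 1) * v n)

noncomputable def green (n k : ℕ) : ℂ := psi a b z n * phi a b z k - phi a b z n * psi a b z k

variable {a b z}

theorem IsSol.isSolFrom {u : ℕ → ℂ} (hu : IsSol a b z u) (m : ℕ) : IsSolFrom a b z m u :=
  fun n _ => hu n

theorem isSol_solOfInit (ha : ∀ i, a i ≠ 0) (c₀ c₁ : ℂ) : IsSol a b z (solOfInit a b z c₀ c₁) := by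
  intro n
  have h : a (n + 1) * solOfInit a b z c₀ c₁ (n + 2)
      = (z - b (n + 1)) * solOfInit a b z c₀ c₁ (n + 1) - a n * solOfInit a b z c₀ c₁ n :=
    mul_div_cancel₀ _ (ha (n + 1))
  linear_combination h

theorem isSol_phi (ha : ∀ i, a i ≠ 0) : IsSol a b z (phi a b z) := isSol_solOfInit ha _ _

theorem isSol_psi (ha : ∀ i, a i ≠ 0) : IsSol a b z (psi a b z) := isSol_solOfInit ha _ _

theorem IsSol.wronskian_eq {u v : ℕ → ℂ} (hu : IsSol a b z u) (hv : IsSol a b z v) (n : ℕ) :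
    wronskian a u v n = wronskian a u v 0 := by
  induction n with
  | zero => rfl
  | succ n ih =>
    rw [← ih]
    unfold wronskian
    linear_combination u (n + 1) * hv n - v (n + 1) * hu n

theorem wronskian_phi_psi (ha : ∀ i, a i ≠ 0) (n : ℕ) :
    wronskian a (phi a b z) (psi a b z) n = 1 := by
  rw [(isSol_phi ha).wronskian_eq (isSol_psi ha)]
  simp [wronskian, phi, psi, solOfInit, ha 0]

theorem IsSolFrom.eqOn {m : ℕ} {u v : ℕ → ℂ} (ha : ∀ i, a i ≠ 0) (hu : IsSolFrom a b z m u)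
    (hv : IsSolFrom a b z m v) (h₀ : u m = v m) (h₁ : u (m + 1) = v (m + 1)) :
    ∀ n, m ≤ n → u n = v n := by
  suffices ∀ n, m ≤ n → u n = v n ∧ u (n + 1) = v (n + 1) from fun n hn => (this n hn).1
  refine fun n hn => Nat.le_induction ⟨h₀, h₁⟩ (fun n hn ih => ⟨ih.2, ?_⟩) n hn
  have h := hu n hn
  rw [ih.1, ih.2] at h
  exact mul_left_cancel₀ (ha (n + 1)) (by linear_combination h - hv n hn)

/-- A solution on `[m, ∞)` is the restriction of the global solution `α phi + β psi`, whose
coefficients are read off from Wronskians since `wronskian phi psi = 1`. -/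
theorem IsSolFrom.exists_isSol_eqOn {m : ℕ} {w : ℕ → ℂ} (ha : ∀ i, a i ≠ 0)
    (hw : IsSolFrom a b z m w) : ∃ r, IsSol a b z r ∧ ∀ n, m ≤ n → r n = w n := by
  set α := wronskian a w (psi a b z) m
  set β := wronskian a (phi a b z) w m
  have hW := wronskian_phi_psi (b := b) (z := z) ha m
  unfold wronskian at hW
  have hr : IsSol a b z fun n => α * phi a b z n + β * psi a b z n := fun n => by
    linear_combination α * isSol_phi (z := z) ha n + β * isSol_psi (z := z) ha n
  refine ⟨_, hr, (hr.isSolFrom m).eqOn ha hw ?_ ?_⟩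
  · simp only [α, β, wronskian]
    linear_combination w m * hW
  · simp only [α, β, wronskian]
    linear_combination w (m + 1) * hW

theorem sum_green_mul (s : Finset ℕ) (c : ℕ → ℂ) (n : ℕ) :
    ∑ k ∈ s, green a b z n k * c k
      = psi a b z n * ∑ k ∈ s, phi a b z k * c k - phi a b z n * ∑ k ∈ s, psi a b z k * c k := by
  simp only [mul_sum, ← sum_sub_distrib, green]
  exact sum_congr rfl fun _ _ => by ring

theorem sum_Ico_green_mul_rec (ha : ∀ i, a i ≠ 0) (c : ℕ → ℂ) {m n : ℕ} (hn : m ≤ n) :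
    let v := fun n => ∑ k ∈ Ico m n, green a b z n k * c k
    a n * v n + b (n + 1) * v (n + 1) + a (n + 1) * v (n + 2) = z * v (n + 1) + c (n + 1) := by
  have hW := wronskian_phi_psi (b := b) (z := z) ha (n + 1)
  unfold wronskian at hW
  simp only [sum_green_mul]
  rw [sum_Ico_succ_top (hn.trans (Nat.le_add_right n 1)), sum_Ico_succ_top hn,
    sum_Ico_succ_top (hn.trans (Nat.le_add_right n 1)), sum_Ico_succ_top hn]
  linear_combination
    (∑ k ∈ Ico m n, phi a b z k * c k + phi a b z n * c n) * isSol_psi (z := z) ha n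
      - (∑ k ∈ Ico m n, psi a b z k * c k + psi a b z n * c n) * isSol_phi (z := z) ha n
      + c (n + 1) * hW

theorem IsSol.exists_eq_add_sum_green {z' : ℂ} {u : ℕ → ℂ} (ha : ∀ i, a i ≠ 0)
    (hu : IsSol a b z' u) (m : ℕ) :
    ∃ r, IsSol a b z r ∧
      ∀ n, m ≤ n → u n = r n + ∑ k ∈ Ico m n, green a b z n k * ((z' - z) * u k) := by
  set v := fun n => ∑ k ∈ Ico m n, green a b z n k * ((z' - z) * u k)
  have hw : IsSolFrom a b z m (u - v) := fun n hn => by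
    simp only [Pi.sub_apply]
    linear_combination hu n - sum_Ico_green_mul_rec ha (fun k => (z' - z) * u k) hn
  obtain ⟨r, hr, hrw⟩ := hw.exists_isSol_eqOn ha
  exact ⟨r, hr, fun n hn => by rw [hrw n hn]; simp [v]⟩

theorem norm_green_le (n k : ℕ) :
    ‖green a b z n k‖ ≤ (‖phi a b z n‖ + ‖psi a b z n‖) * (‖phi a b z k‖ + ‖psi a b z k‖) := by
  calc ‖green a b z n k‖ ≤ ‖psi a b z n‖ * ‖phi a b z k‖ + ‖phi a b z n‖ * ‖psi a b z k‖ := by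
        simpa only [green, norm_mul] using
          norm_sub_le (psi a b z n * phi a b z k) (phi a b z n * psi a b z k)
    _ ≤ _ := by nlinarith [norm_nonneg (phi a b z n), norm_nonneg (psi a b z n),
        norm_nonneg (phi a b z k), norm_nonneg (psi a b z k)]

theorem norm_sum_green_mul_le (s : Finset ℕ) (c : ℂ) (u : ℕ → ℂ) (n : ℕ) :
    ‖∑ k ∈ s, green a b z n k * (c * u k)‖
      ≤ ‖c‖ * (‖phi a b z n‖ + ‖psi a b z n‖)
          * ∑ k ∈ s, (‖phi a b z k‖ + ‖psi a b z k‖) * ‖u k‖ := by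
  rw [mul_sum]
  refine (norm_sum_le _ _).trans (sum_le_sum fun k _ => ?_)
  rw [norm_mul, norm_mul]
  have := mul_le_mul_of_nonneg_right (norm_green_le (a := a) (b := b) (z := z) n k)
    (mul_nonneg (norm_nonneg c) (norm_nonneg (u k)))
  linarith

end ThreeTermRecurrence

open ThreeTermRecurrence

/-- scalar Hellinger theorem, pointwise form: if for some `z₀ ∈ ℂ` every
solution of the scalar three-term recurrence
`a_{i-1} u_{i-1} + b_i u_i + a_i u_{i+1} = z u_i` (`i ≥ 1`) at `z = z₀` is square
summable, then the same holds at every `z ∈ ℂ`.  Here `b i` for `i ≥ 1` are the diagonal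
coefficients (the value `b 0` is irrelevant). -/
theorem statement19 (a b : ℕ → ℂ) (ha : ∀ i, a i ≠ 0) (z0 : ℂ)
    (h : ∀ u : ℕ → ℂ,
      (∀ i : ℕ, a i * u i + b (i + 1) * u (i + 1) + a (i + 1) * u (i + 2)
        = z0 * u (i + 1)) →
      Summable (fun i : ℕ => ‖u i‖ ^ 2)) :
    ∀ z : ℂ, ∀ u : ℕ → ℂ,
      (∀ i : ℕ, a i * u i + b (i + 1) * u (i + 1) + a (i + 1) * u (i + 2)
        = z * u (i + 1)) →
      Summable (fun i : ℕ => ‖u i‖ ^ 2) := by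
  intro z u hu
  have hf : Summable fun n => (‖phi a b z0 n‖ + ‖psi a b z0 n‖) ^ 2 :=
    (h _ (isSol_phi ha)).sq_add (h _ (isSol_psi ha))
  obtain ⟨m, hm⟩ := (hf.mul_left ‖z - z0‖).exists_forall_sum_Ico_le one_half_pos
  obtain ⟨r, hr, hur⟩ := IsSol.exists_eq_add_sum_green (z := z0) ha hu m
  refine summable_sq_of_le_add_volterra (fun n => norm_nonneg (u n)) (norm_nonneg (z - z0))
    (h r hr) (fun n => (mul_sum ..).trans_le (hm n)) fun n hn => ?_
  rw [hur n hn]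
  exact (norm_add_le _ _).trans (add_le_add_right (norm_sum_green_mul_le _ _ _ _) _)
end
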